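/- arXiv:2212.05663 — 8 statements merged into one kernel-verified Lean document; each statement's English description precedes it below -/
import Mathlib

section
/- For any finite set D of points in ℝⁿ and any affine hyperplane strictly separating D into two parts D₁ and D₂ (with D₁ on the zero side and D₂ on the positive side), there exist a weight vector w ∈ ℝⁿ, a bias c ∈ ℝ, an output weight α ∈ ℝ, and a bias vector b ∈ ℝⁿ such that the map F(x) = ReLU(x + b + α·ReLU(⟨w,x⟩ + c)·𝟙) (applied coordinatewise, with 𝟙 the all-ones vector) satisfies: F(x) = x + b for all x ∈ D₁, and F(x) = 0 for all x ∈ D₂. -/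
/-- Coordinatewise ReLU on `ℝⁿ`. -/
noncomputable def reluV {n : ℕ} (v : Fin n → ℝ) : Fin n → ℝ := fun i => max 0 (v i)

/-- A simplest `n`-block: identity shortcut plus a single ReLU gate unit,
`F(x) = ReLU(x + b + α · ReLU(⟨w,x⟩ + c) · 𝟙)`. -/
noncomputable def simpleBlock {n : ℕ} (w : Fin n → ℝ) (c α : ℝ) (b : Fin n → ℝ)
    (x : Fin n → ℝ) : Fin n → ℝ :=
  reluV (fun i => x i + b i + α * max 0 ((∑ j, w j * x j) + c))

/-- Composition `F_k ∘ ⋯ ∘ F_1` of a finite family of maps (applied in order `F_1` first). -/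
noncomputable def chain {n k : ℕ} (Fs : Fin k → ((Fin n → ℝ) → (Fin n → ℝ)))
    (x : Fin n → ℝ) : Fin n → ℝ :=
  (List.ofFn Fs).foldl (fun y f => f y) x

/-- Lemma 1: a simplest `n`-block classifies a linearly separable two-category finite set,
translating `D₁` and zeroing out `D₂`. -/
theorem stmt0 {n : ℕ} (D₁ D₂ : Finset (Fin n → ℝ)) (w₀ : Fin n → ℝ) (c₀ : ℝ)
    (h₁ : ∀ x ∈ D₁, (∑ i, w₀ i * x i) + c₀ ≤ 0)
    (h₂ : ∀ x ∈ D₂, 0 < (∑ i, w₀ i * x i) + c₀) :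
    ∃ (w : Fin n → ℝ) (c α : ℝ) (b : Fin n → ℝ),
      (∀ x ∈ D₁, simpleBlock w c α b x = fun i => x i + b i) ∧
      (∀ x ∈ D₂, simpleBlock w c α b x = 0) := by
  set s : (Fin n → ℝ) → ℝ := fun x => (∑ i, w₀ i * x i) + c₀ with hs
  set b : Fin n → ℝ := fun i => ∑ x ∈ D₁, |x i| with hb
  set C : ℝ := ∑ x ∈ D₂, ∑ i, |x i + b i| with hC
  have hCnn : 0 ≤ C := Finset.sum_nonneg fun x _ =>
    Finset.sum_nonneg fun i _ => abs_nonneg _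
  set α : ℝ := -C * ∑ y ∈ D₂, (s y)⁻¹ with hα
  refine ⟨w₀, c₀, α, b, ?_, ?_⟩
  · intro x hx
    funext i
    have hs0 : max 0 (s x) = 0 := max_eq_left (h₁ x hx)
    have hbi : |x i| ≤ b i :=
      Finset.single_le_sum (f := fun y => |y i|) (fun y _ => abs_nonneg _) hx
    have hnn : 0 ≤ x i + b i := by
      have := neg_abs_le (x i); linarith
    simp only [simpleBlock, reluV, hs0, mul_zero, add_zero]
    rw [show max 0 (∑ j, w₀ j * x j + c₀) = 0 from hs0, mul_zero, add_zero]
    exact max_eq_right hnn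
  · intro x hx
    funext i
    have hsx : 0 < s x := h₂ x hx
    have h1 : (1 : ℝ) ≤ (∑ y ∈ D₂, (s y)⁻¹) * s x := by
      have : (s x)⁻¹ ≤ ∑ y ∈ D₂, (s y)⁻¹ :=
        Finset.single_le_sum (f := fun y => (s y)⁻¹)
          (fun y hy => inv_nonneg.mpr (h₂ y hy).le) hx
      calc (1 : ℝ) = (s x)⁻¹ * s x := (inv_mul_cancel₀ hsx.ne').symm
        _ ≤ (∑ y ∈ D₂, (s y)⁻¹) * s x := by
            exact mul_le_mul_of_nonneg_right this hsx.le
    have hαs : α * s x ≤ -C := by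
      have := mul_le_mul_of_nonneg_left h1 hCnn
      rw [hα]; nlinarith
    have hxb : x i + b i ≤ C := by
      have h2 : |x i + b i| ≤ ∑ j, |x j + b j| :=
        Finset.single_le_sum (f := fun j => |x j + b j|)
          (fun j _ => abs_nonneg _) (Finset.mem_univ i)
      have h3 : ∑ j, |x j + b j| ≤ C :=
        Finset.single_le_sum (f := fun y => ∑ j, |y j + b j|)
          (fun y _ => Finset.sum_nonneg fun j _ => abs_nonneg _) hx
      have := le_abs_self (x i + b i); linarith
    have hmax : max 0 (s x) = s x := max_eq_right hsx.le
    simp only [simpleBlock, reluV, hmax, Pi.zero_apply]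
    rw [show max 0 (∑ j, w₀ j * x j + c₀) = s x from hmax]
    exact max_eq_left (by linarith)
end

section
/- For any finite family of disjoint finite sets D₁,…,D_k ⊆ ℝⁿ, there exists a ReLU neural network with shortcut connections (a ResNet in the paper's sense: a composition of blocks x ↦ ReLU(Wx + b + diag(α)·g(x)) where g is a one-hidden-layer ReLU network) whose output F : ℝⁿ → ℝᵏ satisfies: for all x ∈ D_i, the i-th coordinate of F(x) is strictly positive and all other coordinates are zero. -/
/-- Functions computed by feedforward ReLU networks. -/
inductive IsReLUNet : ∀ {n m : ℕ}, ((Fin n → ℝ) → (Fin m → ℝ)) → Prop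
  | id {n : ℕ} : IsReLUNet (fun x : Fin n → ℝ => x)
  | layer {n p m : ℕ} (A : Matrix (Fin m) (Fin p) ℝ) (c : Fin m → ℝ)
      {f : (Fin n → ℝ) → (Fin p → ℝ)} (hf : IsReLUNet f) :
      IsReLUNet (fun x => reluV (A.mulVec (f x) + c))

/-- A ResNet block `y = ReLU(Wx + b + α ∘ g(x))` with shortcut matrix `W`, bias `b`,
gate output weights `α` and a ReLU gate network `g`. -/
def IsResNetBlock {n m : ℕ} (F : (Fin n → ℝ) → (Fin m → ℝ)) : Prop :=
  ∃ (W : Matrix (Fin m) (Fin n) ℝ) (b α : Fin m → ℝ) (g : (Fin n → ℝ) → (Fin m → ℝ)),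
    IsReLUNet g ∧ ∀ x, F x = reluV (fun i => W.mulVec x i + b i + α i * g x i)

/-- `IsResNetAux F k`: `F` is a composition of exactly `k` ResNet blocks. -/
inductive IsResNetAux : ∀ {n m : ℕ}, ((Fin n → ℝ) → (Fin m → ℝ)) → ℕ → Prop
  | block {n m : ℕ} {F : (Fin n → ℝ) → (Fin m → ℝ)} (h : IsResNetBlock F) : IsResNetAux F 1
  | comp {n p m k : ℕ} {F : (Fin n → ℝ) → (Fin p → ℝ)} {G : (Fin p → ℝ) → (Fin m → ℝ)}
      (hF : IsResNetAux F k) (hG : IsResNetBlock G) : IsResNetAux (fun x => G (F x)) (k + 1)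

/-- A ResNet: a composition of at least two ResNet blocks. -/
def IsResNet {n m : ℕ} (F : (Fin n → ℝ) → (Fin m → ℝ)) : Prop :=
  ∃ k, 2 ≤ k ∧ IsResNetAux F k


noncomputable def l1 {n : ℕ} (p q : Fin n → ℝ) : ℝ := ∑ j, |p j - q j|

lemma l1_nonneg {n : ℕ} (p q : Fin n → ℝ) : 0 ≤ l1 p q :=
  Finset.sum_nonneg fun _ _ => abs_nonneg _

lemma l1_self {n : ℕ} (p : Fin n → ℝ) : l1 p p = 0 := by simp [l1]

lemma l1_pos {n : ℕ} {p q : Fin n → ℝ} (h : p ≠ q) : 0 < l1 p q := by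
  obtain ⟨j, hj⟩ : ∃ j, p j ≠ q j := by
    by_contra hc; push_neg at hc; exact h (funext hc)
  refine Finset.sum_pos' (fun _ _ => abs_nonneg _) ⟨j, Finset.mem_univ j, ?_⟩
  exact abs_pos.mpr (sub_ne_zero.mpr hj)

lemma relu_add_relu_neg (a : ℝ) : max 0 a + max 0 (-a) = |a| := by
  rcases le_total 0 a with h | h
  · rw [max_eq_right h, max_eq_left (by linarith), abs_of_nonneg h]; ring
  · rw [max_eq_left h, max_eq_right (by linarith), abs_of_nonpos h]; ring

lemma exists_sep {n : ℕ} (S : Finset (Fin n → ℝ)) :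
    ∃ δ : ℝ, 0 < δ ∧ ∀ p ∈ S, ∀ q ∈ S, p ≠ q → δ ≤ l1 p q := by
  classical
  set T := (S ×ˢ S).filter fun pq => pq.1 ≠ pq.2 with hT
  have hmemT : ∀ p q : Fin n → ℝ, (p, q) ∈ T ↔ (p ∈ S ∧ q ∈ S) ∧ p ≠ q := by
    intro p q
    rw [hT, Finset.mem_filter, Finset.mem_product]
  by_cases hTne : T.Nonempty
  · refine ⟨T.inf' hTne fun pq => l1 pq.1 pq.2, ?_, ?_⟩
    · rw [Finset.lt_inf'_iff]
      rintro ⟨p, q⟩ hpq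
      exact l1_pos ((hmemT p q).mp hpq).2
    · intro p hp q hq hpq
      exact Finset.inf'_le _ ((hmemT p q).mpr ⟨⟨hp, hq⟩, hpq⟩)
  · refine ⟨1, one_pos, fun p hp q hq hpq => absurd ⟨(p, q), (hmemT p q).mpr ⟨⟨hp, hq⟩, hpq⟩⟩ hTne⟩

lemma exists_indicator_net {n k : ℕ} (D : Fin k → Finset (Fin n → ℝ))
    (hdisj : ∀ i j, i ≠ j → Disjoint (D i) (D j))
    (S : Finset (Fin n → ℝ)) (hSD : ∀ i, D i ⊆ S)
    (δ : ℝ) (hδpos : 0 < δ) (hδ : ∀ p ∈ S, ∀ q ∈ S, p ≠ q → δ ≤ l1 p q) :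
    ∃ g : (Fin n → ℝ) → (Fin k → ℝ), IsReLUNet g ∧
      ∀ i j : Fin k, ∀ x ∈ D j, g x i = if i = j then 1 else 0 := by
  classical
  set N := Fintype.card (↥S × Fin n × Bool) with hN
  set e : Fin N ≃ ↥S × Fin n × Bool := (Fintype.equivFin (↥S × Fin n × Bool)).symm with he
  set M := S.card with hM
  set e2 : Fin M ≃ ↥S := S.equivFin.symm with he2
  set sg : Bool → ℝ := fun s => if s then 1 else -1 with hsg
  set A₁ : Matrix (Fin N) (Fin n) ℝ :=
    fun r j' => if j' = (e r).2.1 then sg (e r).2.2 else 0 with hA₁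
  set c₁ : Fin N → ℝ := fun r => -(sg (e r).2.2 * ((e r).1 : Fin n → ℝ) (e r).2.1) with hc₁
  set A₂ : Matrix (Fin M) (Fin N) ℝ :=
    fun r r' => if (e r').1 = e2 r then -δ⁻¹ else 0 with hA₂
  set c₂ : Fin M → ℝ := fun _ => 1 with hc₂
  set A₃ : Matrix (Fin k) (Fin M) ℝ :=
    fun i r => if ((e2 r : ↥S) : Fin n → ℝ) ∈ D i then 1 else 0 with hA₃
  have h1 : ∀ (x : Fin n → ℝ) (r : Fin N),
      reluV (A₁.mulVec x + c₁) r
        = max 0 (sg (e r).2.2 * (x (e r).2.1 - ((e r).1 : Fin n → ℝ) (e r).2.1)) := by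
    intro x r
    simp only [reluV, Pi.add_apply, Matrix.mulVec, dotProduct, hA₁, hc₁, ite_mul, zero_mul,
      Finset.sum_ite_eq', Finset.mem_univ, if_true]
    congr 1
    ring
  have h2 : ∀ (x : Fin n → ℝ) (r : Fin M),
      reluV (A₂.mulVec (reluV (A₁.mulVec x + c₁)) + c₂) r
        = max 0 (1 - δ⁻¹ * l1 x ((e2 r : ↥S) : Fin n → ℝ)) := by
    intro x r
    have hsum : A₂.mulVec (reluV (A₁.mulVec x + c₁)) r
        = -δ⁻¹ * l1 x ((e2 r : ↥S) : Fin n → ℝ) := by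
      have : ∀ r' : Fin N, A₂ r r' * reluV (A₁.mulVec x + c₁) r'
          = (fun t : ↥S × Fin n × Bool =>
              (if t.1 = e2 r then -δ⁻¹ else 0)
                * max 0 (sg t.2.2 * (x t.2.1 - (t.1 : Fin n → ℝ) t.2.1))) (e r') := by
        intro r'
        rw [h1]
      simp only [Matrix.mulVec, dotProduct]
      rw [Finset.sum_congr rfl fun r' _ => this r']
      rw [Equiv.sum_comp e (fun t : ↥S × Fin n × Bool =>
        (if t.1 = e2 r then -δ⁻¹ else 0)
          * max 0 (sg t.2.2 * (x t.2.1 - (t.1 : Fin n → ℝ) t.2.1)))]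
      rw [Fintype.sum_prod_type]
      have inner : ∀ q : ↥S,
          (∑ u : Fin n × Bool, (if q = e2 r then -δ⁻¹ else 0)
            * max 0 (sg u.2 * (x u.1 - (q : Fin n → ℝ) u.1)))
          = (if q = e2 r then -δ⁻¹ else 0) * l1 x (q : Fin n → ℝ) := by
        intro q
        rw [← Finset.mul_sum]
        congr 1
        rw [Fintype.sum_prod_type]
        unfold l1
        refine Finset.sum_congr rfl fun j _ => ?_
        rw [Fintype.sum_bool]
        simp only [hsg, if_true, if_false, Bool.false_eq_true, one_mul, neg_one_mul]
        rw [relu_add_relu_neg]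
      rw [Finset.sum_congr rfl fun q _ => inner q]
      simp only [ite_mul, zero_mul, Finset.sum_ite_eq', Finset.mem_univ, if_true]
    simp only [reluV, Pi.add_apply, hsum, hc₂]
    congr 1
    ring
  have h2' : ∀ q ∈ S, ∀ r : Fin M,
      reluV (A₂.mulVec (reluV (A₁.mulVec q + c₁)) + c₂) r
        = if ((e2 r : ↥S) : Fin n → ℝ) = q then 1 else 0 := by
    intro q hq r
    rw [h2]
    by_cases hqr : ((e2 r : ↥S) : Fin n → ℝ) = q
    · rw [if_pos hqr, hqr]
      rw [show l1 q q = 0 from l1_self q]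
      norm_num
    · rw [if_neg hqr]
      have hle : δ ≤ l1 q ((e2 r : ↥S) : Fin n → ℝ) :=
        hδ q hq _ (e2 r).2 (fun h => hqr h.symm)
      have : 1 - δ⁻¹ * l1 q ((e2 r : ↥S) : Fin n → ℝ) ≤ 0 := by
        have h1' : (1 : ℝ) = δ⁻¹ * δ := (inv_mul_cancel₀ hδpos.ne').symm
        nlinarith [mul_le_mul_of_nonneg_left hle (le_of_lt (inv_pos.mpr hδpos))]
      exact max_eq_left this
  refine ⟨fun x => reluV (A₃.mulVec (reluV (A₂.mulVec (reluV (A₁.mulVec x + c₁)) + c₂)) + 0),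
    .layer A₃ 0 (.layer A₂ c₂ (.layer A₁ c₁ .id)), ?_⟩
  intro i j x hx
  have hxS : x ∈ S := hSD j hx
  have hsum : A₃.mulVec (reluV (A₂.mulVec (reluV (A₁.mulVec x + c₁)) + c₂)) i
      = if x ∈ D i then 1 else 0 := by
    have : ∀ r : Fin M, A₃ i r * reluV (A₂.mulVec (reluV (A₁.mulVec x + c₁)) + c₂) r
        = (fun p : ↥S => (if (p : Fin n → ℝ) ∈ D i then 1 else 0)
            * (if (p : Fin n → ℝ) = x then 1 else 0)) (e2 r) := by
      intro r
      rw [h2' x hxS]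
    simp only [Matrix.mulVec, dotProduct]
    rw [Finset.sum_congr rfl fun r _ => this r]
    rw [Equiv.sum_comp e2 (fun p : ↥S => (if (p : Fin n → ℝ) ∈ D i then (1:ℝ) else 0)
      * (if (p : Fin n → ℝ) = x then 1 else 0))]
    rw [Finset.sum_coe_sort S (fun y => (if y ∈ D i then (1:ℝ) else 0) * (if y = x then 1 else 0))]
    simp only [mul_ite, mul_one, mul_zero, Finset.sum_ite_eq', hxS, if_true]
  have hgoal : (if x ∈ D i then (1:ℝ) else 0) = if i = j then 1 else 0 := by
    by_cases hij : i = j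
    · subst hij; rw [if_pos hx, if_pos rfl]
    · rw [if_neg hij, if_neg (fun hxi => (hdisj i j hij).forall_ne_finset hxi hx rfl)]
  simp only [reluV, Pi.add_apply, Pi.zero_apply, add_zero, hsum, hgoal]
  split <;> norm_num

/-- Theorem 1: a ResNet classifies any finite multi-category data set, outputting a
positive `i`-th coordinate and zero elsewhere on category `i`. -/
theorem stmt5 {n k : ℕ} (D : Fin k → Finset (Fin n → ℝ))
    (hdisj : ∀ i j, i ≠ j → Disjoint (D i) (D j)) :
    ∃ F : (Fin n → ℝ) → (Fin k → ℝ), IsResNet F ∧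
      ∀ i : Fin k, ∀ x ∈ D i, 0 < F x i ∧ ∀ j, j ≠ i → F x j = 0 := by
  classical
  set S := (Finset.univ : Finset (Fin k)).biUnion D with hS
  have hSD : ∀ i, D i ⊆ S := fun i => Finset.subset_biUnion_of_mem D (Finset.mem_univ i)
  obtain ⟨δ, hδpos, hδ⟩ := exists_sep S
  obtain ⟨g, hg, hgval⟩ := exists_indicator_net D hdisj S hSD δ hδpos hδ
  set F₁ : (Fin n → ℝ) → (Fin k → ℝ) :=
    fun x => reluV (fun i =>
      (0 : Matrix (Fin k) (Fin n) ℝ).mulVec x i + (-(1/2) : ℝ) + 1 * g x i) with hF₁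
  set G : (Fin k → ℝ) → (Fin k → ℝ) :=
    fun y => reluV (fun i =>
      (1 : Matrix (Fin k) (Fin k) ℝ).mulVec y i + (0 : ℝ) + 0 * y i) with hG
  refine ⟨fun x => G (F₁ x), ⟨2, le_refl 2, ?_⟩, ?_⟩
  · exact .comp (.block ⟨0, fun _ => -(1/2), fun _ => 1, g, hg, fun x => rfl⟩)
      ⟨1, fun _ => 0, fun _ => 0, fun y => y, .id, fun y => rfl⟩
  · intro i x hx
    have hF₁val : ∀ j, F₁ x j = if j = i then 1/2 else 0 := by
      intro j
      simp only [hF₁, reluV, Matrix.zero_mulVec, Pi.zero_apply, one_mul, hgval j i x hx]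
      split <;> norm_num
    have hGval : ∀ j, G (F₁ x) j = F₁ x j := by
      intro j
      simp only [hG, reluV, Matrix.one_mulVec, add_zero, zero_mul]
      rw [hF₁val j]
      split <;> norm_num
    refine ⟨?_, fun j hj => ?_⟩
    · show 0 < G (F₁ x) i
      rw [hGval i, hF₁val i, if_pos rfl]; norm_num
    · show G (F₁ x) j = 0
      rw [hGval j, hF₁val j, if_neg hj]
end

section
/- For every continuous piecewise linear function f : ℝ → ℝ and every compact interval [a,b], there exists a ResNet (a finite composition of blocks of the form x ↦ ReLU(Wx + b' + α ∘ g(x)) with g a ReLU network, followed by an affine readout) that computes f exactly on [a,b]. -/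
/-- A continuous piecewise linear function on `ℝ`: affine on finitely many pieces. -/
def IsCPWL (f : ℝ → ℝ) : Prop :=
  Continuous f ∧ ∃ (k : ℕ) (t : Fin (k + 1) → ℝ), Monotone t ∧
    (∃ p q : ℝ, ∀ x ≤ t 0, f x = p * x + q) ∧
    (∀ i : Fin k, ∃ p q : ℝ, ∀ x ∈ Set.Icc (t i.castSucc) (t i.succ), f x = p * x + q) ∧
    (∃ p q : ℝ, ∀ x, t (Fin.last k) ≤ x → f x = p * x + q)

theorem cpwl_rep (f : ℝ → ℝ) (hf : IsCPWL f) :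
    ∃ (N : ℕ) (c s : Fin N → ℝ) (P Q : ℝ),
      ∀ x, f x = P * x + Q + ∑ i, c i * max 0 (x - s i) := by
  obtain ⟨_, k, t, ht, ⟨pL, qL, hL⟩, hmid, ⟨pR, qR, hR⟩⟩ := hf
  have AUX : ∀ j, ∀ (hj : j < k + 1), ∃ (N : ℕ) (c s : Fin N → ℝ) (P Q p q : ℝ),
      (∀ x ≤ t ⟨j, hj⟩, P * x + Q + ∑ i, c i * max 0 (x - s i) = f x) ∧
      (∀ x, t ⟨j, hj⟩ ≤ x → P * x + Q + ∑ i, c i * max 0 (x - s i) = p * x + q) := by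
    intro j
    induction j with
    | zero =>
      intro hj
      refine ⟨0, ![], ![], pL, qL, pL, qL, ?_, ?_⟩
      · intro x hx
        have h0 : t ⟨0, hj⟩ = t 0 := by congr 1
        simp only [Finset.univ_eq_empty, Finset.sum_empty, add_zero]
        exact (hL x (by rwa [← h0])).symm
      · intro x _; simp
    | succ j ih =>
      intro hj
      have hjk : j < k + 1 := by omega
      have hjk' : j < k := by omega
      obtain ⟨N, c, s, P, Q, p, q, hhead, htail⟩ := ih hjk
      obtain ⟨p', q', hpiece⟩ := hmid ⟨j, hjk'⟩
      have hcs : (⟨j, hjk'⟩ : Fin k).castSucc = ⟨j, hjk⟩ := rfl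
      have hsc : (⟨j, hjk'⟩ : Fin k).succ = ⟨j + 1, hj⟩ := rfl
      rw [hcs, hsc] at hpiece
      have hmono : t ⟨j, hjk⟩ ≤ t ⟨j + 1, hj⟩ := ht (by simp [Fin.le_def])
      set τ := t ⟨j, hjk⟩ with hτ
      -- value at τ
      have hfτ : f τ = p * τ + q := by rw [← hhead τ le_rfl, htail τ le_rfl]
      have hfτ' : f τ = p' * τ + q' := hpiece τ ⟨le_rfl, hmono⟩
      refine ⟨N + 1, Fin.cons (p' - p) c, Fin.cons τ s, P, Q, p', q', ?_⟩
      have hsum : ∀ x, ∑ i : Fin (N + 1),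
          (Fin.cons (p' - p) c : Fin (N+1) → ℝ) i * max 0 (x - (Fin.cons τ s : Fin (N+1) → ℝ) i) =
          (p' - p) * max 0 (x - τ) + ∑ i, c i * max 0 (x - s i) := by
        intro x
        rw [Fin.sum_univ_succ]
        simp
      have hright : ∀ x, τ ≤ x →
          P * x + Q + ∑ i : Fin (N + 1),
            (Fin.cons (p' - p) c : Fin (N+1) → ℝ) i * max 0 (x - (Fin.cons τ s : Fin (N+1) → ℝ) i) = p' * x + q' := by
        intro x hx
        rw [hsum]
        have h1 : max 0 (x - τ) = x - τ := max_eq_right (by linarith)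
        have := htail x hx
        rw [h1]
        nlinarith [this, hfτ, hfτ']
      constructor
      · intro x hx
        rcases le_or_gt x τ with h | h
        · rw [hsum]
          have h1 : max 0 (x - τ) = 0 := max_eq_left (by linarith)
          rw [h1, mul_zero, zero_add]
          exact hhead x h
        · rw [hright x h.le]
          exact (hpiece x ⟨h.le, hx⟩).symm
      · intro x hx
        exact hright x (le_trans hmono hx)
  obtain ⟨N, c, s, P, Q, p, q, hhead, htail⟩ := AUX k (by omega)
  have hlast : t (Fin.last k) = t ⟨k, by omega⟩ := rfl
  set τ := t ⟨k, Nat.lt_succ_self k⟩ with hτ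
  have hfτ : f τ = p * τ + q := by rw [← hhead τ le_rfl, htail τ le_rfl]
  have hfτ' : f τ = pR * τ + qR := hR τ (by rw [hlast])
  refine ⟨N + 1, Fin.cons (pR - p) c, Fin.cons τ s, P, Q, ?_⟩
  intro x
  have hsum : ∑ i : Fin (N + 1),
      (Fin.cons (pR - p) c : Fin (N+1) → ℝ) i * max 0 (x - (Fin.cons τ s : Fin (N+1) → ℝ) i) =
      (pR - p) * max 0 (x - τ) + ∑ i, c i * max 0 (x - s i) := by
    rw [Fin.sum_univ_succ]; simp
  rcases le_or_gt x τ with h | h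
  · rw [hsum]
    have h1 : max 0 (x - τ) = 0 := max_eq_left (by linarith)
    rw [h1, mul_zero, zero_add]
    exact (hhead x h).symm
  · rw [hsum]
    have h1 : max 0 (x - τ) = x - τ := max_eq_right (by linarith)
    have h2 := htail x h.le
    have h3 : f x = pR * x + qR := hR x (by rw [hlast]; exact h.le)
    rw [h1]
    nlinarith [h2, hfτ, hfτ']

theorem net_part (N : ℕ) (c s : Fin N → ℝ) (P Q : ℝ) (f : ℝ → ℝ)
    (hrep : ∀ x, f x = P * x + Q + ∑ i, c i * max 0 (x - s i)) (a b : ℝ) :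
    ∃ (m : ℕ) (G : (Fin 1 → ℝ) → (Fin m → ℝ)) (u : Fin m → ℝ) (v : ℝ),
      IsResNet G ∧ ∀ x ∈ Set.Icc a b, (∑ i, u i * G (fun _ => x) i) + v = f x := by
  set m := N + 1 with hm
  set sh : ℝ := 1 + |a| with hsh
  set bb : Fin m → ℝ := Fin.cons sh (fun i => - s i) with hbb
  set W : Matrix (Fin m) (Fin 1) ℝ := fun _ _ => 1 with hW
  -- zero gate networks
  have hg1 : IsReLUNet (fun x : Fin 1 → ℝ =>
      reluV ((0 : Matrix (Fin m) (Fin 1) ℝ).mulVec x + 0)) :=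
    IsReLUNet.layer 0 0 IsReLUNet.id
  have hg2 : IsReLUNet (fun x : Fin m → ℝ =>
      reluV ((0 : Matrix (Fin m) (Fin m) ℝ).mulVec x + 0)) :=
    IsReLUNet.layer 0 0 IsReLUNet.id
  set F1 : (Fin 1 → ℝ) → (Fin m → ℝ) := fun x =>
    reluV (fun i => W.mulVec x i + bb i +
      (0 : Fin m → ℝ) i * reluV ((0 : Matrix (Fin m) (Fin 1) ℝ).mulVec x + 0) i) with hF1
  set F2 : (Fin m → ℝ) → (Fin m → ℝ) := fun y =>
    reluV (fun i => (1 : Matrix (Fin m) (Fin m) ℝ).mulVec y i + (0 : Fin m → ℝ) i +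
      (0 : Fin m → ℝ) i * reluV ((0 : Matrix (Fin m) (Fin m) ℝ).mulVec y + 0) i) with hF2
  have hb1 : IsResNetBlock F1 := ⟨W, bb, 0, _, hg1, fun x => rfl⟩
  have hb2 : IsResNetBlock F2 := ⟨1, 0, 0, _, hg2, fun x => rfl⟩
  refine ⟨m, fun x => F2 (F1 x), Fin.cons P c, Q - P * sh,
    ⟨2, le_rfl, IsResNetAux.comp (IsResNetAux.block hb1) hb2⟩, ?_⟩
  intro x hx
  have hval : ∀ i, F2 (F1 (fun _ => x)) i = max 0 (x + bb i) := by
    intro i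
    have h1 : F1 (fun _ => x) i = max 0 (x + bb i) := by
      simp [hF1, reluV, Matrix.mulVec, dotProduct, Fin.sum_univ_one, hW]
    have h2 : ∀ y : Fin m → ℝ, F2 y i = max 0 (y i) := by
      intro y
      simp [hF2, reluV, Matrix.one_mulVec]
    rw [h2, h1]
    exact max_eq_right (le_max_left _ _)
  have hsum : ∑ i, (Fin.cons P c : Fin m → ℝ) i * F2 (F1 (fun _ => x)) i =
      P * max 0 (x + sh) + ∑ i, c i * max 0 (x - s i) := by
    rw [Fin.sum_univ_succ]
    congr 1
    · rw [hval 0]; simp [hbb]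
    · refine Finset.sum_congr rfl fun i _ => ?_
      rw [hval i.succ]
      simp [hbb, sub_eq_add_neg]
  have hpos : max 0 (x + sh) = x + sh := by
    have := hx.1
    have := neg_abs_le a
    apply max_eq_right
    simp only [hsh]
    linarith
  rw [hsum, hpos, hrep x]
  ring

/-- Theorem 2 in dimension one: every continuous piecewise linear function is computed
exactly on a compact interval by a ResNet with an affine readout. -/
theorem stmt7 (f : ℝ → ℝ) (hf : IsCPWL f) (a b : ℝ) :
    ∃ (m : ℕ) (G : (Fin 1 → ℝ) → (Fin m → ℝ)) (u : Fin m → ℝ) (v : ℝ),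
      IsResNet G ∧ ∀ x ∈ Set.Icc a b, (∑ i, u i * G (fun _ => x) i) + v = f x := by
  obtain ⟨N, c, s, P, Q, hrep⟩ := cpwl_rep f hf
  exact net_part N c s P Q f hrep a b
end

section
/- ResNets are universal approximators: for every continuous function f : K → ℝ on a compact set K ⊆ ℝⁿ and every ε > 0, there exists a ResNet (a composition of blocks x ↦ ReLU(Wx + b + α ∘ g(x)) with ReLU gate networks g, followed by a linear readout) computing a function F with sup_{x ∈ K} |F(x) − f(x)| < ε. -/
namespace Stmt8Aux


/-- Depth-tracked ReLU networks. -/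
inductive NetD : ℕ → ∀ {n m : ℕ}, ((Fin n → ℝ) → (Fin m → ℝ)) → Prop
  | zero {n : ℕ} : NetD 0 (fun x : Fin n → ℝ => x)
  | succ {d n p m : ℕ} (A : Matrix (Fin m) (Fin p) ℝ) (c : Fin m → ℝ)
      {f : (Fin n → ℝ) → (Fin p → ℝ)} (hf : NetD d f) :
      NetD (d + 1) (fun x => reluV (A.mulVec (f x) + c))

theorem NetD.nonneg {d n m : ℕ} {f : (Fin n → ℝ) → (Fin m → ℝ)}
    (h : NetD (d + 1) f) (x : Fin n → ℝ) (i : Fin m) : 0 ≤ f x i := by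
  cases h with
  | succ A c hf => exact le_max_left _ _

theorem reluV_of_nonneg {m : ℕ} {v : Fin m → ℝ} (h : ∀ i, 0 ≤ v i) : reluV v = v :=
  funext fun i => max_eq_right (h i)

theorem append_add {a b : ℕ} (u v : Fin a → ℝ) (w z : Fin b → ℝ) :
    Fin.append u w + Fin.append v z = Fin.append (u + v) (w + z) := by
  funext i
  induction i using Fin.addCases with
  | left i => simp [Fin.append_left]
  | right i => simp [Fin.append_right]

theorem reluV_append {a b : ℕ} (u : Fin a → ℝ) (w : Fin b → ℝ) :
    reluV (Fin.append u w) = Fin.append (reluV u) (reluV w) := by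
  funext i
  induction i using Fin.addCases with
  | left i => simp [reluV, Fin.append_left]
  | right i => simp [reluV, Fin.append_right]

theorem sum_append_mul {a b : ℕ} (p : Fin a → ℝ) (q : Fin b → ℝ)
    (y : Fin a → ℝ) (z : Fin b → ℝ) :
    (∑ i, Fin.append p q i * Fin.append y z i) =
      (∑ i, p i * y i) + ∑ i, q i * z i := by
  rw [Fin.sum_univ_add]
  simp [Fin.append_left, Fin.append_right]

def vstack {a b q : ℕ} (A : Matrix (Fin a) (Fin q) ℝ) (B : Matrix (Fin b) (Fin q) ℝ) :
    Matrix (Fin (a + b)) (Fin q) ℝ :=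
  Matrix.of fun i j => Fin.append (fun i' => A i' j) (fun i' => B i' j) i

theorem vstack_mulVec {a b q : ℕ} (A : Matrix (Fin a) (Fin q) ℝ) (B : Matrix (Fin b) (Fin q) ℝ)
    (y : Fin q → ℝ) :
    (vstack A B).mulVec y = Fin.append (A.mulVec y) (B.mulVec y) := by
  funext i
  induction i using Fin.addCases with
  | left i => simp [vstack, Matrix.mulVec, dotProduct, Fin.append_left]
  | right i => simp [vstack, Matrix.mulVec, dotProduct, Fin.append_right]

def hstack {a p q : ℕ} (A : Matrix (Fin a) (Fin p) ℝ) (B : Matrix (Fin a) (Fin q) ℝ) :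
    Matrix (Fin a) (Fin (p + q)) ℝ :=
  Matrix.of fun i => Fin.append (A i) (B i)

theorem hstack_mulVec {a p q : ℕ} (A : Matrix (Fin a) (Fin p) ℝ) (B : Matrix (Fin a) (Fin q) ℝ)
    (y : Fin p → ℝ) (z : Fin q → ℝ) :
    (hstack A B).mulVec (Fin.append y z) = A.mulVec y + B.mulVec z := by
  funext i
  simp [hstack, Matrix.mulVec, dotProduct, Fin.sum_univ_add,
    Fin.append_left, Fin.append_right]

theorem NetD.pad {d n m : ℕ} {f : (Fin n → ℝ) → (Fin m → ℝ)} (h : NetD (d + 1) f) :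
    NetD (d + 2) f := by
  have h' := NetD.succ (1 : Matrix (Fin m) (Fin m) ℝ) 0 h
  have e : (fun x => reluV ((1 : Matrix (Fin m) (Fin m) ℝ).mulVec (f x) + 0)) = f := by
    funext x
    rw [Matrix.one_mulVec, add_zero, reluV_of_nonneg (fun i => h.nonneg x i)]
  rwa [e] at h'

theorem NetD.pad_add {d n m : ℕ} {f : (Fin n → ℝ) → (Fin m → ℝ)} (h : NetD (d + 1) f)
    (k : ℕ) : NetD (d + 1 + k) f := by
  induction k with
  | zero => exact h
  | succ k ih =>
    rw [show d + 1 + k = (d + k) + 1 from by omega] at ih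
    have h2 := ih.pad
    rwa [show (d + k) + 2 = d + 1 + (k + 1) from by omega] at h2

theorem NetD.pair {d : ℕ} : ∀ {n m₁ m₂ : ℕ} {f₁ : (Fin n → ℝ) → (Fin m₁ → ℝ)}
    {f₂ : (Fin n → ℝ) → (Fin m₂ → ℝ)}, NetD (d + 1) f₁ → NetD (d + 1) f₂ →
    NetD (d + 1) (fun x => Fin.append (f₁ x) (f₂ x)) := by
  induction d with
  | zero =>
    intro n m₁ m₂ f₁ f₂ h₁ h₂
    cases h₁ with
    | succ A₁ c₁ hf₁ =>
      cases h₂ with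
      | succ A₂ c₂ hf₂ =>
        cases hf₁
        cases hf₂
        have h' := NetD.succ (vstack A₁ A₂) (Fin.append c₁ c₂) (NetD.zero (n := n))
        have e : (fun x : Fin n → ℝ => reluV ((vstack A₁ A₂).mulVec x + Fin.append c₁ c₂)) =
            fun x => Fin.append (reluV (A₁.mulVec x + c₁)) (reluV (A₂.mulVec x + c₂)) := by
          funext x
          rw [vstack_mulVec, append_add, reluV_append]
        rwa [e] at h'
  | succ d ih =>
    intro n m₁ m₂ f₁ f₂ h₁ h₂
    cases h₁ with
    | succ A₁ c₁ hf₁ =>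
      cases h₂ with
      | succ A₂ c₂ hf₂ =>
        rename_i p₁ g₁ p₂ g₂
        have hg := ih hf₁ hf₂
        have h' := NetD.succ (vstack (hstack A₁ 0) (hstack 0 A₂)) (Fin.append c₁ c₂) hg
        have e : (fun x : Fin n → ℝ => reluV
              ((vstack (hstack A₁ 0) (hstack 0 A₂)).mulVec (Fin.append (g₁ x) (g₂ x)) +
                Fin.append c₁ c₂)) =
            fun x => Fin.append (reluV (A₁.mulVec (g₁ x) + c₁)) (reluV (A₂.mulVec (g₂ x) + c₂)) := by
          funext x
          rw [vstack_mulVec, hstack_mulVec, hstack_mulVec, Matrix.zero_mulVec,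
            Matrix.zero_mulVec, add_zero, zero_add, append_add, reluV_append]
        rwa [e] at h'


theorem NetD.isReLUNet {d n m : ℕ} {f : (Fin n → ℝ) → (Fin m → ℝ)} (h : NetD d f) :
    IsReLUNet f := by
  induction h with
  | zero => exact IsReLUNet.id
  | succ A c hf ih => exact IsReLUNet.layer A c ih

theorem continuous_reluV {m : ℕ} : Continuous (reluV (n := m)) :=
  continuous_pi fun i => continuous_const.max ((continuous_apply i))

theorem NetD.continuous {d n m : ℕ} {f : (Fin n → ℝ) → (Fin m → ℝ)} (h : NetD d f) :
    Continuous f := by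
  induction h with
  | zero => exact continuous_id
  | succ A c hf ih =>
    have h2 : Continuous fun y : Fin _ → ℝ => A.mulVec y + c :=
      (A.mulVecLin.continuous_of_finiteDimensional).add continuous_const
    exact continuous_reluV.comp (h2.comp ih)

/-- Readout of a depth-`≥ 2` ReLU net. -/
def Rep {n : ℕ} (φ : (Fin n → ℝ) → ℝ) : Prop :=
  ∃ (m d : ℕ) (h : (Fin n → ℝ) → (Fin m → ℝ)) (u : Fin m → ℝ) (v : ℝ),
    NetD (d + 2) h ∧ ∀ x, φ x = (∑ i, u i * h x i) + v

theorem max_zero_sub (t : ℝ) : max 0 t - max 0 (-t) = t := by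
  rcases le_total t 0 with h | h
  · rw [max_eq_left h, max_eq_right (neg_nonneg.mpr h)]; ring
  · rw [max_eq_right h, max_eq_left (neg_nonpos.mpr h)]; ring

theorem Rep.affine {n : ℕ} (w : Fin n → ℝ) (b : ℝ) :
    Rep (fun x => (∑ j, w j * x j) + b) := by
  classical
  set A : Matrix (Fin 2) (Fin n) ℝ := Matrix.of ![w, fun j => -w j] with hA
  refine ⟨2, 0, fun x => reluV ((1 : Matrix (Fin 2) (Fin 2) ℝ).mulVec
      (reluV (A.mulVec x + 0)) + 0), ![1, -1], b,
    NetD.succ 1 0 (NetD.succ A 0 NetD.zero), fun x => ?_⟩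
  have hx : reluV ((1 : Matrix (Fin 2) (Fin 2) ℝ).mulVec (reluV (A.mulVec x + 0)) + 0)
      = reluV (A.mulVec x + 0) := by
    rw [Matrix.one_mulVec, add_zero]
    exact reluV_of_nonneg (fun i => le_max_left _ _)
  simp only [hx]
  have h0 : (A.mulVec x + 0) 0 = ∑ j, w j * x j := by
    simp [hA, Matrix.mulVec, dotProduct]
  have h1 : (A.mulVec x + 0) 1 = -∑ j, w j * x j := by
    simp [hA, Matrix.mulVec, dotProduct]
  rw [Fin.sum_univ_two]
  show (∑ j, w j * x j) + b = 1 * max 0 ((A.mulVec x + 0) 0) +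
      (-1) * max 0 ((A.mulVec x + 0) 1) + b
  rw [h0, h1]
  have := max_zero_sub (∑ j, w j * x j)
  linarith

theorem Rep.continuous {n : ℕ} {φ : (Fin n → ℝ) → ℝ} (h : Rep φ) : Continuous φ := by
  obtain ⟨m, d, hn, u, v, N, E⟩ := h
  have : φ = fun x => (∑ i, u i * hn x i) + v := funext E
  rw [this]
  exact (continuous_finset_sum _ fun i _ =>
    continuous_const.mul ((continuous_apply i).comp N.continuous)).add continuous_const

theorem Rep.mix {n : ℕ} {φ₁ φ₂ : (Fin n → ℝ) → ℝ} (h₁ : Rep φ₁) (h₂ : Rep φ₂) (s : ℝ) :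
    Rep (fun x => (φ₁ x + φ₂ x) / 2 +
      s * (max 0 (φ₁ x - φ₂ x) + max 0 (φ₂ x - φ₁ x))) := by
  obtain ⟨m₁, d₁, g₁, u₁, v₁, N₁, E₁⟩ := h₁
  obtain ⟨m₂, d₂, g₂, u₂, v₂, N₂, E₂⟩ := h₂
  set D := max d₁ d₂ with hD
  have N₁' : NetD (D + 2) g₁ := by
    have := N₁.pad_add (D - d₁)
    rwa [show d₁ + 1 + 1 + (D - d₁) = D + 2 from by omega] at this
  have N₂' : NetD (D + 2) g₂ := by
    have := N₂.pad_add (D - d₂)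
    rwa [show d₂ + 1 + 1 + (D - d₂) = D + 2 from by omega] at this
  set H : (Fin n → ℝ) → (Fin (m₁ + m₂) → ℝ) := fun x => Fin.append (g₁ x) (g₂ x) with hH
  have NH : NetD (D + 2) H := N₁'.pair N₂'
  set C₂ : Matrix (Fin 2) (Fin (m₁ + m₂)) ℝ :=
    Matrix.of ![Fin.append u₁ (-u₂), Fin.append (-u₁) u₂] with hC₂
  set B : Matrix (Fin (m₁ + m₂ + 2)) (Fin (m₁ + m₂)) ℝ :=
    vstack (1 : Matrix (Fin (m₁ + m₂)) (Fin (m₁ + m₂)) ℝ) C₂ with hB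
  set c : Fin (m₁ + m₂ + 2) → ℝ :=
    Fin.append (0 : Fin (m₁ + m₂) → ℝ) ![v₁ - v₂, v₂ - v₁] with hc
  refine ⟨m₁ + m₂ + 2, D + 1, fun x => reluV (B.mulVec (H x) + c),
    Fin.append (Fin.append (fun i => u₁ i / 2) (fun i => u₂ i / 2)) ![s, s],
    (v₁ + v₂) / 2, NetD.succ B c NH, fun x => ?_⟩
  have hHnn : ∀ i, 0 ≤ H x i := by
    intro i
    induction i using Fin.addCases with
    | left i => simpa [hH, Fin.append_left] using N₁'.nonneg x i
    | right i => simpa [hH, Fin.append_right] using N₂'.nonneg x i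
  have row0 : C₂.mulVec (H x) 0 = (∑ i, u₁ i * g₁ x i) - ∑ i, u₂ i * g₂ x i := by
    show (∑ j, C₂ 0 j * H x j) = _
    have e : ∀ j, C₂ 0 j * H x j =
        Fin.append u₁ (-u₂) j * Fin.append (g₁ x) (g₂ x) j := fun j => rfl
    simp only [e]
    rw [sum_append_mul]
    simp [neg_mul, sub_eq_add_neg]
  have row1 : C₂.mulVec (H x) 1 = (∑ i, u₂ i * g₂ x i) - ∑ i, u₁ i * g₁ x i := by
    show (∑ j, C₂ 1 j * H x j) = _
    have e : ∀ j, C₂ 1 j * H x j =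
        Fin.append (-u₁) u₂ j * Fin.append (g₁ x) (g₂ x) j := fun j => rfl
    simp only [e]
    rw [sum_append_mul]
    simp [neg_mul, sub_eq_add_neg]
    ring
  have hmv : C₂.mulVec (H x) + ![v₁ - v₂, v₂ - v₁] = ![φ₁ x - φ₂ x, φ₂ x - φ₁ x] := by
    funext i
    match i with
    | 0 =>
      show C₂.mulVec (H x) 0 + (v₁ - v₂) = φ₁ x - φ₂ x
      rw [row0, E₁ x, E₂ x]; ring
    | 1 =>
      show C₂.mulVec (H x) 1 + (v₂ - v₁) = φ₂ x - φ₁ x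
      rw [row1, E₁ x, E₂ x]; ring
  have hh : reluV (B.mulVec (H x) + c) =
      Fin.append (H x) (reluV ![φ₁ x - φ₂ x, φ₂ x - φ₁ x]) := by
    rw [hB, vstack_mulVec, Matrix.one_mulVec, hc, append_add, reluV_append,
      add_zero, reluV_of_nonneg hHnn, hmv]
  simp only [hh]
  simp only [hH]
  rw [sum_append_mul, sum_append_mul]
  have q₁ : (∑ i, u₁ i / 2 * g₁ x i) = (∑ i, u₁ i * g₁ x i) / 2 := by
    rw [Finset.sum_div]; exact Finset.sum_congr rfl fun i _ => by ring
  have q₂ : (∑ i, u₂ i / 2 * g₂ x i) = (∑ i, u₂ i * g₂ x i) / 2 := by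
    rw [Finset.sum_div]; exact Finset.sum_congr rfl fun i _ => by ring
  have q₃ : (∑ i : Fin 2, ![s, s] i * reluV ![φ₁ x - φ₂ x, φ₂ x - φ₁ x] i) =
      s * max 0 (φ₁ x - φ₂ x) + s * max 0 (φ₂ x - φ₁ x) := by
    rw [Fin.sum_univ_two]; simp [reluV]
  rw [q₁, q₂, q₃, E₁ x, E₂ x]
  ring

theorem rep_max {n : ℕ} {φ₁ φ₂ : (Fin n → ℝ) → ℝ} (h₁ : Rep φ₁) (h₂ : Rep φ₂) :
    Rep (fun x => max (φ₁ x) (φ₂ x)) := by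
  have h := Rep.mix h₁ h₂ (1 / 2)
  have e : (fun x => max (φ₁ x) (φ₂ x)) = fun x => (φ₁ x + φ₂ x) / 2 +
      (1 / 2 : ℝ) * (max 0 (φ₁ x - φ₂ x) + max 0 (φ₂ x - φ₁ x)) := by
    funext x
    rcases le_total (φ₁ x) (φ₂ x) with h' | h'
    · rw [max_eq_right h', max_eq_left (by linarith : φ₁ x - φ₂ x ≤ 0),
        max_eq_right (by linarith : (0:ℝ) ≤ φ₂ x - φ₁ x)]
      ring
    · rw [max_eq_left h', max_eq_right (by linarith : (0:ℝ) ≤ φ₁ x - φ₂ x),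
        max_eq_left (by linarith : φ₂ x - φ₁ x ≤ 0)]
      ring
  rw [e]; exact h

theorem rep_min {n : ℕ} {φ₁ φ₂ : (Fin n → ℝ) → ℝ} (h₁ : Rep φ₁) (h₂ : Rep φ₂) :
    Rep (fun x => min (φ₁ x) (φ₂ x)) := by
  have h := Rep.mix h₁ h₂ (-(1 / 2))
  have e : (fun x => min (φ₁ x) (φ₂ x)) = fun x => (φ₁ x + φ₂ x) / 2 +
      (-(1 / 2) : ℝ) * (max 0 (φ₁ x - φ₂ x) + max 0 (φ₂ x - φ₁ x)) := by
    funext x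
    rcases le_total (φ₁ x) (φ₂ x) with h' | h'
    · rw [min_eq_left h', max_eq_left (by linarith : φ₁ x - φ₂ x ≤ 0),
        max_eq_right (by linarith : (0:ℝ) ≤ φ₂ x - φ₁ x)]
      ring
    · rw [min_eq_right h', max_eq_right (by linarith : (0:ℝ) ≤ φ₁ x - φ₂ x),
        max_eq_left (by linarith : φ₂ x - φ₁ x ≤ 0)]
      ring
  rw [e]; exact h

theorem Rep.toResNet {n : ℕ} {φ : (Fin n → ℝ) → ℝ} (h : Rep φ) :
    ∃ (m : ℕ) (G : (Fin n → ℝ) → (Fin m → ℝ)) (u : Fin m → ℝ) (v : ℝ),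
      IsResNet G ∧ ∀ x, φ x = (∑ i, u i * G x i) + v := by
  obtain ⟨m, d, hn, u, v, N, E⟩ := h
  cases N with
  | succ A c hf =>
    rename_i p f₀
    refine ⟨m, _, u, v, ⟨2, le_refl 2, ?_⟩, E⟩
    have B1 : IsResNetBlock f₀ := by
      refine ⟨0, 0, fun _ => 1, f₀, hf.isReLUNet, fun x => ?_⟩
      have e : (fun i => (0 : Matrix (Fin p) (Fin n) ℝ).mulVec x i +
          (0 : Fin p → ℝ) i + 1 * f₀ x i) = f₀ x := by
        funext i; simp [Matrix.zero_mulVec]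
      rw [e, reluV_of_nonneg (fun i => hf.nonneg x i)]
    have B2 : IsResNetBlock (fun y : Fin p → ℝ => reluV (A.mulVec y + c)) := by
      refine ⟨A, c, 0, fun y => reluV ((0 : Matrix (Fin m) (Fin p) ℝ).mulVec y + 0),
        IsReLUNet.layer 0 0 IsReLUNet.id, fun y => ?_⟩
      rw [show (fun i => A.mulVec y i + c i + (0 : Fin m → ℝ) i *
          reluV ((0 : Matrix (Fin m) (Fin p) ℝ).mulVec y + 0) i) = A.mulVec y + c from
        funext fun i => by simp]
    exact IsResNetAux.comp (F := f₀)
      (G := fun y : Fin p → ℝ => reluV (A.mulVec y + c)) (IsResNetAux.block B1) B2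

end Stmt8Aux

/-- Theorem 2: ResNets (with a linear readout) are universal approximators of continuous
functions on compact subsets of `ℝⁿ` in the uniform norm. -/
theorem stmt8 {n : ℕ} (K : Set (Fin n → ℝ)) (hK : IsCompact K)
    (f : (Fin n → ℝ) → ℝ) (hf : ContinuousOn f K) (ε : ℝ) (hε : 0 < ε) :
    ∃ (m : ℕ) (G : (Fin n → ℝ) → (Fin m → ℝ)) (u : Fin m → ℝ) (v : ℝ),
      IsResNet G ∧ ∀ x ∈ K, |(∑ i, u i * G x i) + v - f x| < ε := by
  classical
  haveI : CompactSpace K := isCompact_iff_compactSpace.mp hK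
  set L : Set C(K, ℝ) := {F | ∃ φ : (Fin n → ℝ) → ℝ,
    Stmt8Aux.Rep φ ∧ ∀ z : K, F z = φ (z : Fin n → ℝ)} with hL
  have memL : ∀ (w : Fin n → ℝ) (b : ℝ) (F : C(K, ℝ)),
      (∀ z : K, F z = (∑ j, w j * (z : Fin n → ℝ) j) + b) → F ∈ L := by
    intro w b F hFz
    exact ⟨_, Stmt8Aux.Rep.affine w b, hFz⟩
  have nA : L.Nonempty := by
    refine ⟨ContinuousMap.const K 0, memL 0 0 _ fun z => ?_⟩
    simp
  have inf_mem : ∀ F ∈ L, ∀ G ∈ L, F ⊓ G ∈ L := by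
    rintro F ⟨φ, hφ, hFz⟩ G ⟨ψ, hψ, hGz⟩
    refine ⟨fun x => min (φ x) (ψ x), Stmt8Aux.rep_min hφ hψ, fun z => ?_⟩
    simp [ContinuousMap.inf_apply, hFz z, hGz z]
  have sup_mem : ∀ F ∈ L, ∀ G ∈ L, F ⊔ G ∈ L := by
    rintro F ⟨φ, hφ, hFz⟩ G ⟨ψ, hψ, hGz⟩
    refine ⟨fun x => max (φ x) (ψ x), Stmt8Aux.rep_max hφ hψ, fun z => ?_⟩
    simp [ContinuousMap.sup_apply, hFz z, hGz z]
  have sep : L.SeparatesPointsStrongly := by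
    intro v x y
    by_cases hxy : (x : Fin n → ℝ) = (y : Fin n → ℝ)
    · have hxy' : x = y := Subtype.ext hxy
      cases hxy'
      refine ⟨ContinuousMap.const K (v x), memL 0 (v x) _ fun z => ?_, by simp, by simp⟩
      simp
    · obtain ⟨j, hj⟩ : ∃ j, (x : Fin n → ℝ) j ≠ (y : Fin n → ℝ) j := Function.ne_iff.mp hxy
      set a : ℝ := (v x - v y) / ((x : Fin n → ℝ) j - (y : Fin n → ℝ) j) with ha
      set b : ℝ := v x - a * (x : Fin n → ℝ) j with hb
      set w : Fin n → ℝ := fun j' => if j' = j then a else 0 with hw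
      have hsum : ∀ z : Fin n → ℝ, (∑ j', w j' * z j') + b = a * z j + b := by
        intro z
        congr 1
        rw [hw]
        simp [ite_mul]
      have hcont : Continuous fun z : K => a * (z : Fin n → ℝ) j + b :=
        (continuous_const.mul ((continuous_apply j).comp continuous_subtype_val)).add
          continuous_const
      refine ⟨⟨fun z : K => a * (z : Fin n → ℝ) j + b, hcont⟩,
        memL w b _ fun z => (hsum (z : Fin n → ℝ)).symm ▸ rfl, ?_, ?_⟩
      · show a * (x : Fin n → ℝ) j + b = v x
        rw [hb]; ring
      · show a * (y : Fin n → ℝ) j + b = v y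
        have hne : (x : Fin n → ℝ) j - (y : Fin n → ℝ) j ≠ 0 := sub_ne_zero.mpr hj
        rw [hb, ha]
        field_simp
        ring
  have hcl : closure L = ⊤ :=
    ContinuousMap.sublattice_closure_eq_top L nA inf_mem sup_mem sep
  set fK : C(K, ℝ) := ⟨K.restrict f, hf.restrict⟩ with hfK
  have hmem : fK ∈ closure L := by rw [hcl]; trivial
  obtain ⟨F, hFL, hdist⟩ := Metric.mem_closure_iff.mp hmem ε hε
  obtain ⟨φ, hφ, hFφ⟩ := hFL
  obtain ⟨m, G, u, v, hG, hread⟩ := hφ.toResNet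
  refine ⟨m, G, u, v, hG, fun x hx => ?_⟩
  have h1 : dist (fK ⟨x, hx⟩) (F ⟨x, hx⟩) ≤ dist fK F :=
    ContinuousMap.dist_apply_le_dist _
  have h2 : |f x - φ x| < ε := by
    have : fK ⟨x, hx⟩ = f x := rfl
    calc |f x - φ x| = dist (fK ⟨x, hx⟩) (F ⟨x, hx⟩) := by
          rw [Real.dist_eq, this, hFφ ⟨x, hx⟩]
      _ ≤ dist fK F := h1
      _ < ε := hdist
  rw [← hread x, abs_sub_comm]
  exact h2
end

section
/- Let D₂ be a finite subset of {x ∈ ℝⁿ : ⟨w,x⟩ + c > 0} and let b ∈ ℝⁿ. Then there exists α < 0 such that for all x ∈ D₂ and all coordinates j: x_j + b_j + α·ReLU(⟨w,x⟩ + c) ≤ 0, hence ReLU(x + b + α·ReLU(⟨w,x⟩+c)·𝟙) = 0 on D₂. -/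
/-- Key step of Lemma 1: a sufficiently negative gate output weight suppresses a finite
set of points lying strictly on the positive side of the gate hyperplane. -/
theorem stmt9 {n : ℕ} (w : Fin n → ℝ) (c : ℝ) (D₂ : Finset (Fin n → ℝ))
    (hD₂ : ∀ x ∈ D₂, 0 < (∑ i, w i * x i) + c) (b : Fin n → ℝ) :
    ∃ α : ℝ, α < 0 ∧ ∀ x ∈ D₂,
      (∀ j, x j + b j + α * max 0 ((∑ i, w i * x i) + c) ≤ 0) ∧
      simpleBlock w c α b x = 0 := by
  rcases D₂.eq_empty_or_nonempty with hE | hne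
  · exact ⟨-1, by norm_num, by simp [hE]⟩
  · set m : ℝ := D₂.inf' hne (fun x => (∑ i, w i * x i) + c) with hm
    have hmpos : 0 < m := by
      rw [hm, Finset.lt_inf'_iff]
      exact fun x hx => hD₂ x hx
    set C : ℝ := D₂.sup' hne (fun x => ∑ j, |x j + b j|) with hC
    have hCnn : 0 ≤ C := by
      obtain ⟨x, hx⟩ := hne
      have h1 : (0:ℝ) ≤ ∑ j, |x j + b j| := Finset.sum_nonneg fun j _ => abs_nonneg _
      have h2 : (∑ j, |x j + b j|) ≤ C := Finset.le_sup' (fun y => ∑ j, |y j + b j|) hx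
      linarith
    refine ⟨-(C + 1) / m, div_neg_of_neg_of_pos (by linarith) hmpos, fun x hx => ?_⟩
    have hg : 0 < (∑ i, w i * x i) + c := hD₂ x hx
    have hmle : m ≤ (∑ i, w i * x i) + c := Finset.inf'_le _ hx
    have key : ∀ j, x j + b j + (-(C + 1) / m) * max 0 ((∑ i, w i * x i) + c) ≤ 0 := by
      intro j
      rw [max_eq_right hg.le]
      have h1 : (-(C + 1) / m) * ((∑ i, w i * x i) + c) ≤ (-(C + 1) / m) * m :=
        mul_le_mul_of_nonpos_left hmle (le_of_lt (div_neg_of_neg_of_pos (by linarith) hmpos))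
      have h2 : (-(C + 1) / m) * m = -(C + 1) := by field_simp
      have h3 : x j + b j ≤ C := by
        refine le_trans (le_trans (le_abs_self _) ?_) (Finset.le_sup' _ hx)
        exact Finset.single_le_sum (f := fun j => |x j + b j|)
          (fun i _ => abs_nonneg _) (Finset.mem_univ j)
      linarith
    refine ⟨key, ?_⟩
    funext i
    simp only [simpleBlock, reluV, Pi.zero_apply]
    exact max_eq_left (key i)
end

section
/- For any two disjoint finite sets A, B ⊆ ℝⁿ there exists a one-hidden-layer ReLU network g : ℝⁿ → ℝ (g(x) = Σᵢ aᵢ·ReLU(⟨wᵢ,x⟩+cᵢ) + d) with g(x) > 0 on A and g(x) ≤ 0 on B; consequently a single ResNet block y = ReLU(x·0 + 0 + 1·ReLU(g(x))) with this two-layer gate network separates A from B (positive output on A, zero output on B). -/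
/-- The linear functional `v ↦ ∑ j, v j * x j`. -/
def stmt12Phi {n : ℕ} (x : Fin n → ℝ) : (Fin n → ℝ) →ₗ[ℝ] ℝ where
  toFun v := ∑ j, v j * x j
  map_add' a b := by simp [add_mul, Finset.sum_add_distrib]
  map_smul' m a := by simp [Finset.mul_sum, mul_assoc]

/-- A generic direction is injective on a finite set. -/
lemma stmt12_aux {n : ℕ} (S : Finset (Fin n → ℝ)) :
    ∃ v : Fin n → ℝ, ∀ p ∈ S, ∀ q ∈ S, p ≠ q →
      (∑ j, v j * p j) ≠ (∑ j, v j * q j) := by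
  by_contra hcon
  push_neg at hcon
  set T := (S ×ˢ S).filter fun z => z.1 ≠ z.2 with hT
  set P : T → Subspace ℝ (Fin n → ℝ) :=
    fun z => LinearMap.ker (stmt12Phi (z.1.1 - z.1.2)) with hP
  have hcovers : ⋃ z, (P z : Set (Fin n → ℝ)) = Set.univ := by
    ext v
    simp only [Set.mem_iUnion, Set.mem_univ, iff_true]
    obtain ⟨p, hp, q, hq, hpq, heq⟩ := hcon v
    refine ⟨⟨(p, q), ?_⟩, ?_⟩
    · simp [hT, hp, hq, hpq]
    · simp only [SetLike.mem_coe, LinearMap.mem_ker, hP]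
      show (∑ j, v j * (p - q) j) = 0
      simp only [Pi.sub_apply, mul_sub]
      rw [Finset.sum_sub_distrib, heq, sub_self]
  obtain ⟨z, hz⟩ := Subspace.exists_eq_top_of_iUnion_eq_univ hcovers
  -- the kernel is everything, so the functional vanishes at p - q itself
  obtain ⟨⟨p, q⟩, hzmem⟩ := z
  simp only [hT, Finset.mem_filter, Finset.mem_product] at hzmem
  have hne : p - q ≠ 0 := sub_ne_zero.mpr hzmem.2
  have hker : stmt12Phi (p - q) (p - q) = 0 := by
    have : (p - q) ∈ LinearMap.ker (stmt12Phi (p - q)) := by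
      rw [show LinearMap.ker (stmt12Phi (p - q)) = P ⟨(p,q), by
        simp [hT, hzmem.1.1, hzmem.1.2, hzmem.2]⟩ from rfl, hz]
      trivial
    exact this
  have hpos : 0 < stmt12Phi (p - q) (p - q) := by
    show 0 < ∑ j, (p - q) j * (p - q) j
    obtain ⟨j, hj⟩ := Function.ne_iff.mp hne
    refine Finset.sum_pos' (fun i _ => mul_self_nonneg _) ⟨j, Finset.mem_univ j, ?_⟩
    exact mul_self_pos.mpr hj
  exact hpos.ne' hker

/-- Section 6: a one-hidden-layer ReLU gate network separates any two disjoint finite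
sets, so a single ResNet block `y = ReLU(0·x + 0 + 1·ReLU(g(x)))` with that gate network
gives positive output on `A` and zero output on `B`. -/
theorem stmt12 {n : ℕ} (A B : Finset (Fin n → ℝ)) (hdisj : Disjoint A B) :
    ∃ (N : ℕ) (w : Fin N → Fin n → ℝ) (c a : Fin N → ℝ) (d : ℝ),
      (∀ x ∈ A, 0 < (∑ i, a i * max 0 ((∑ j, w i j * x j) + c i)) + d) ∧
      (∀ x ∈ B, (∑ i, a i * max 0 ((∑ j, w i j * x j) + c i)) + d ≤ 0) ∧
      (∀ x ∈ A, 0 < max 0 (max 0 ((∑ i, a i * max 0 ((∑ j, w i j * x j) + c i)) + d))) ∧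
      (∀ x ∈ B, max 0 (max 0 ((∑ i, a i * max 0 ((∑ j, w i j * x j) + c i)) + d)) = 0) := by
  classical
  set S : Finset (Fin n → ℝ) := A ∪ B with hS
  obtain ⟨v, hv⟩ := stmt12_aux S
  set f : (Fin n → ℝ) → ℝ := fun x => ∑ j, v j * x j with hf
  -- a positive separation gap
  set D : Finset ℝ :=
    insert 1 (((S ×ˢ S).filter fun z => z.1 ≠ z.2).image
      fun z => |f z.1 - f z.2|) with hD
  have hDne : D.Nonempty := ⟨1, Finset.mem_insert_self _ _⟩
  set δ : ℝ := D.min' hDne with hδ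
  have hδpos : 0 < δ := by
    have hmem := D.min'_mem hDne
    show (0:ℝ) < D.min' hDne
    rcases Finset.mem_insert.mp hmem with h1 | h2
    · rw [h1]; norm_num
    · obtain ⟨z, hz, hzeq⟩ := Finset.mem_image.mp h2
      simp only [Finset.mem_filter, Finset.mem_product] at hz
      rw [← hzeq]
      exact abs_pos.mpr (sub_ne_zero.mpr (hv _ hz.1.1 _ hz.1.2 hz.2))
  have hδle : ∀ p ∈ S, ∀ q ∈ S, p ≠ q → δ ≤ |f p - f q| := by
    intro p hp q hq hpq
    apply Finset.min'_le
    rw [hD]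
    exact Finset.mem_insert_of_mem (Finset.mem_image.mpr
      ⟨(p, q), by simp [hp, hq, hpq], rfl⟩)
  -- the network: 3 units per point of A
  set N : ℕ := Fintype.card (↥A × Fin 3) with hN
  set e : Fin N ≃ (↥A × Fin 3) := (Fintype.equivFin (↥A × Fin 3)).symm with he
  set C : ↥A × Fin 3 → ℝ := fun z => ![δ, 0, -δ] z.2 - f z.1 with hC
  set a' : ↥A × Fin 3 → ℝ := fun z => ![1/δ, -2/δ, 1/δ] z.2 with ha'
  refine ⟨N, fun _ => v, fun i => C (e i), fun i => a' (e i), -1/2, ?_⟩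
  have key : ∀ x ∈ S,
      (∑ i : Fin N, a' (e i) * max 0 ((∑ j, v j * x j) + C (e i)))
        = if x ∈ A then 1 else 0 := by
    intro x hx
    rw [Equiv.sum_comp e (fun z => a' z * max 0 ((∑ j, v j * x j) + C z))]
    rw [Fintype.sum_prod_type]
    have hterm : ∀ p : ↥A,
        (∑ k : Fin 3, a' (p, k) * max 0 ((∑ j, v j * x j) + C (p, k)))
          = if x = ↑p then 1 else 0 := by
      intro p
      rw [Fin.sum_univ_three]
      simp only [ha', hC, Matrix.cons_val_zero, Matrix.cons_val_one, Matrix.head_cons,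
        Matrix.cons_val_two, Matrix.tail_cons]
      have hfx : (∑ j, v j * x j) = f x := rfl
      rw [hfx]
      set s : ℝ := f x - f ↑p with hs
      have e1 : f x + (δ - f ↑p) = s + δ := by ring
      have e2 : f x + (0 - f ↑p) = s := by ring
      have e3 : f x + (-δ - f ↑p) = s - δ := by ring
      rw [e1, e2, e3]
      by_cases hxp : x = ↑p
      · have hs0 : s = 0 := by rw [hs, hxp]; ring
        rw [if_pos hxp, hs0]
        rw [max_eq_right (by linarith : (0:ℝ) ≤ 0 + δ),
            max_eq_left (le_refl (0:ℝ)),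
            max_eq_left (by linarith : (0:ℝ) - δ ≤ 0)]
        field_simp
        ring
      · rw [if_neg hxp]
        have hpS : (↑p : Fin n → ℝ) ∈ S := by
          rw [hS]; exact Finset.mem_union_left _ p.2
        have hgap : δ ≤ |s| := hδle x hx _ hpS hxp
        rcases le_or_gt s 0 with h | h
        · -- s ≤ 0 so s ≤ -δ
          have hsneg : s ≤ -δ := by
            rcases abs_cases s with ⟨habs, _⟩ | ⟨habs, _⟩
            · linarith
            · linarith
          rw [max_eq_left (by linarith : s + δ ≤ 0),
              max_eq_left (by linarith : s ≤ 0),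
              max_eq_left (by linarith : s - δ ≤ 0)]
          ring
        · -- s > 0 so s ≥ δ
          have hspos : δ ≤ s := by
            rcases abs_cases s with ⟨habs, _⟩ | ⟨habs, _⟩
            · linarith
            · linarith
          rw [max_eq_right (by linarith : (0:ℝ) ≤ s + δ),
              max_eq_right (by linarith : (0:ℝ) ≤ s),
              max_eq_right (by linarith : (0:ℝ) ≤ s - δ)]
          field_simp
          ring
    rw [Finset.sum_congr rfl (fun p _ => hterm p)]
    rw [Finset.sum_coe_sort A (fun p => if x = p then (1:ℝ) else 0)]
    exact Finset.sum_ite_eq A x (fun _ => (1:ℝ))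
  have hA1 : ∀ x ∈ A,
      (∑ i : Fin N, a' (e i) * max 0 ((∑ j, v j * x j) + C (e i))) = 1 := by
    intro x hxA
    rw [key x (Finset.mem_union_left _ hxA), if_pos hxA]
  have hB0 : ∀ x ∈ B,
      (∑ i : Fin N, a' (e i) * max 0 ((∑ j, v j * x j) + C (e i))) = 0 := by
    intro x hxB
    rw [key x (Finset.mem_union_right _ hxB),
        if_neg (Finset.disjoint_right.mp hdisj hxB)]
  refine ⟨fun x hx => ?_, fun x hx => ?_, fun x hx => ?_, fun x hx => ?_⟩
  · rw [hA1 x hx]; norm_num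
  · rw [hB0 x hx]; norm_num
  · rw [hA1 x hx]; norm_num
  · rw [hB0 x hx]; norm_num
end

section
/- Exact binary indicator realization: for disjoint finite sets D₁, D₂ ⊆ ℝⁿ there exists a ResNet F : ℝⁿ → ℝ (composition of blocks y = ReLU(Wx + b + α ∘ g(x)) with one-hidden-layer ReLU gate networks) and a threshold t > 0 such that F(x) ≥ t for all x ∈ D₁ and F(x) = 0 for all x ∈ D₂. -/
namespace Stmt16Aux

/-- Index equivalence for the first hidden layer. -/
def idx (n k : ℕ) : (Fin k × (Fin n × Fin 2)) ≃ Fin (k * (n * 2)) :=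
  (Equiv.prodCongr (Equiv.refl (Fin k)) finProdFinEquiv).trans finProdFinEquiv

noncomputable def sgn (s : Fin 2) : ℝ := if s = 0 then 1 else -1

variable {n k : ℕ}

noncomputable def A1 : Matrix (Fin (k * (n * 2))) (Fin n) ℝ :=
  fun r j => sgn ((idx n k).symm r).2.2 * (if j = ((idx n k).symm r).2.1 then 1 else 0)

noncomputable def c1 (p : Fin k → Fin n → ℝ) : Fin (k * (n * 2)) → ℝ :=
  fun r => -(sgn ((idx n k).symm r).2.2 * p ((idx n k).symm r).1 ((idx n k).symm r).2.1)

noncomputable def h1 (p : Fin k → Fin n → ℝ) : (Fin n → ℝ) → Fin (k * (n * 2)) → ℝ :=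
  fun x => reluV (A1.mulVec x + c1 p)

lemma max_add_max_neg (t : ℝ) : max 0 t + max 0 (-t) = |t| := by
  rcases le_total 0 t with h | h
  · rw [max_eq_right h, max_eq_left (neg_nonpos.2 h), abs_of_nonneg h]; ring
  · rw [max_eq_left h, max_eq_right (neg_nonneg.2 h), abs_of_nonpos h]; ring

lemma h1_apply (p : Fin k → Fin n → ℝ) (x : Fin n → ℝ) (a : Fin k) (i : Fin n) (s : Fin 2) :
    h1 p x (idx n k (a, (i, s))) = max 0 (sgn s * (x i - p a i)) := by
  simp only [h1, reluV, Pi.add_apply, Matrix.mulVec, dotProduct, A1, c1,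
    Equiv.symm_apply_apply, mul_ite, mul_one, mul_zero, ite_mul, zero_mul]
  rw [Finset.sum_ite_eq' Finset.univ i (fun j => sgn s * x j)]
  simp only [Finset.mem_univ, if_true]
  ring_nf

noncomputable def A2 (δ : ℝ) : Matrix (Fin k) (Fin (k * (n * 2))) ℝ :=
  fun a r => if ((idx n k).symm r).1 = a then -δ⁻¹ else 0

noncomputable def c2 : Fin k → ℝ := fun _ => 1

noncomputable def h2 (δ : ℝ) (p : Fin k → Fin n → ℝ) : (Fin n → ℝ) → Fin k → ℝ :=
  fun x => reluV ((A2 δ).mulVec (h1 p x) + c2)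

lemma h2_apply (δ : ℝ) (p : Fin k → Fin n → ℝ) (x : Fin n → ℝ) (a : Fin k) :
    h2 δ p x a = max 0 (1 - δ⁻¹ * ∑ i, |x i - p a i|) := by
  have hsum : (A2 δ).mulVec (h1 p x) a = -δ⁻¹ * ∑ i, |x i - p a i| := by
    have : (A2 δ).mulVec (h1 p x) a
        = ∑ q : Fin k × (Fin n × Fin 2),
            (if q.1 = a then -δ⁻¹ else 0) * h1 p x (idx n k q) := by
      rw [Matrix.mulVec, dotProduct]
      rw [← Equiv.sum_comp (idx n k) (fun r => A2 δ a r * h1 p x r)]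
      refine Finset.sum_congr rfl fun q _ => ?_
      simp [A2, Equiv.symm_apply_apply]
    rw [this, Fintype.sum_prod_type]
    have : ∀ a' : Fin k,
        (∑ y : Fin n × Fin 2, (if a' = a then -δ⁻¹ else 0) * h1 p x (idx n k (a', y)))
        = if a' = a then -δ⁻¹ * ∑ i, |x i - p a' i| else 0 := by
      intro a'
      by_cases h : a' = a
      · simp only [h, if_true, ← Finset.mul_sum]
        congr 1
        rw [Fintype.sum_prod_type]
        refine Finset.sum_congr rfl fun i _ => ?_
        rw [Fin.sum_univ_two, h1_apply, h1_apply]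
        have h0 : sgn (0 : Fin 2) = 1 := by simp [sgn]
        have h1' : sgn (1 : Fin 2) = -1 := by simp [sgn]
        rw [h0, h1', one_mul, neg_one_mul, max_add_max_neg]
      · simp [h]
    rw [Finset.sum_congr rfl (fun a' _ => this a'), Finset.sum_ite_eq' Finset.univ a]
    simp
  simp only [h2, reluV, Pi.add_apply, hsum, c2]
  ring_nf

noncomputable def A3 (k : ℕ) : Matrix (Fin 1) (Fin k) ℝ := fun _ _ => 1

noncomputable def gnet (δ : ℝ) (p : Fin k → Fin n → ℝ) : (Fin n → ℝ) → Fin 1 → ℝ :=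
  fun x => reluV ((A3 k).mulVec (h2 δ p x) + (fun _ => 0))

lemma gnet_isnet (δ : ℝ) (p : Fin k → Fin n → ℝ) : IsReLUNet (gnet δ p) :=
  IsReLUNet.layer (A3 k) (fun _ => 0)
    (IsReLUNet.layer (A2 δ) c2 (IsReLUNet.layer A1 (c1 p) IsReLUNet.id))

lemma gnet_apply (δ : ℝ) (p : Fin k → Fin n → ℝ) (x : Fin n → ℝ) :
    gnet δ p x 0 = ∑ a : Fin k, max 0 (1 - δ⁻¹ * ∑ i, |x i - p a i|) := by
  have hnn : 0 ≤ ∑ a : Fin k, h2 δ p x a :=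
    Finset.sum_nonneg fun a _ => le_max_left _ _
  simp only [gnet, reluV, Pi.add_apply, Matrix.mulVec, dotProduct, A3, one_mul]
  rw [max_eq_right (by simpa using hnn)]
  simp [h2_apply]

end Stmt16Aux

open Stmt16Aux in
/-- Two-category case of Theorem 1 with a uniform margin: a ResNet realizes an exact
binary indicator with threshold `t > 0` on disjoint finite sets. -/
theorem stmt16 {n : ℕ} (D₁ D₂ : Finset (Fin n → ℝ)) (hdisj : Disjoint D₁ D₂) :
    ∃ (G : (Fin n → ℝ) → (Fin 1 → ℝ)) (t : ℝ), IsResNet G ∧ 0 < t ∧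
      (∀ x ∈ D₁, t ≤ G x 0) ∧ (∀ x ∈ D₂, G x 0 = 0) := by
  classical
  obtain ⟨δ, hδ0, hδ⟩ : ∃ δ : ℝ, 0 < δ ∧ ∀ p ∈ D₁, ∀ q ∈ D₂, δ ≤ ∑ i, |p i - q i| := by
    rcases (D₁ ×ˢ D₂).eq_empty_or_nonempty with h | h
    · refine ⟨1, one_pos, fun p hp q hq => ?_⟩
      have : (p, q) ∈ D₁ ×ˢ D₂ := Finset.mem_product.2 ⟨hp, hq⟩
      rw [h] at this
      exact absurd this (Finset.notMem_empty _)
    · refine ⟨(D₁ ×ˢ D₂).inf' h (fun pq => ∑ i, |pq.1 i - pq.2 i|), ?_, ?_⟩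
      · rw [Finset.lt_inf'_iff]
        rintro ⟨p, q⟩ hpq
        rw [Finset.mem_product] at hpq
        have hne : p ≠ q := fun hEq => (Finset.disjoint_left.1 hdisj hpq.1) (hEq ▸ hpq.2)
        have hex : ∃ i, p i ≠ q i := by
          by_contra hc; push_neg at hc; exact hne (funext hc)
        obtain ⟨i, hi⟩ := hex
        exact Finset.sum_pos' (fun j _ => abs_nonneg _)
          ⟨i, Finset.mem_univ i, abs_pos.2 (sub_ne_zero.2 hi)⟩
      · intro p hp q hq
        have hm : (p, q) ∈ D₁ ×ˢ D₂ := Finset.mem_product.2 ⟨hp, hq⟩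
        exact Finset.inf'_le _ hm
  set k := D₁.card with hk
  set p : Fin k → Fin n → ℝ := fun a => (D₁.equivFin.symm a : Fin n → ℝ) with hpdef
  have hpmem : ∀ a, p a ∈ D₁ := fun a => (D₁.equivFin.symm a).2
  -- the two blocks
  set F : (Fin n → ℝ) → Fin 1 → ℝ := fun x => reluV (fun i =>
    (0 : Matrix (Fin 1) (Fin n) ℝ).mulVec x i + (fun _ => (0:ℝ)) i
      + (fun _ => (1:ℝ)) i * gnet δ p x i) with hF
  set H : (Fin 1 → ℝ) → Fin 1 → ℝ := fun y => reluV (fun i =>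
    (1 : Matrix (Fin 1) (Fin 1) ℝ).mulVec y i + (fun _ => (0:ℝ)) i
      + (fun _ => (0:ℝ)) i * y i) with hH
  have hFblock : IsResNetBlock F :=
    ⟨0, fun _ => 0, fun _ => 1, gnet δ p, gnet_isnet δ p, fun x => rfl⟩
  have hHblock : IsResNetBlock H :=
    ⟨1, fun _ => 0, fun _ => 0, fun y => y, IsReLUNet.id, fun y => rfl⟩
  refine ⟨fun x => H (F x), 1, ⟨2, le_refl 2,
    IsResNetAux.comp (IsResNetAux.block hFblock) hHblock⟩, one_pos, ?_, ?_⟩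
  · -- points of D₁
    intro x hx
    have hg0 : (0:ℝ) ≤ gnet δ p x 0 := le_max_left _ _
    have hFx : F x 0 = gnet δ p x 0 := by
      simp only [hF, reluV, Matrix.zero_mulVec, Pi.zero_apply, zero_add, one_mul]
      exact max_eq_right hg0
    have hHx : H (F x) 0 = max 0 (F x 0) := by
      simp only [hH, reluV, Matrix.one_mulVec, zero_mul, add_zero]
    show (1:ℝ) ≤ H (F x) 0
    rw [hHx, hFx, gnet_apply]
    have key : (1:ℝ) ≤ ∑ a : Fin k, max 0 (1 - δ⁻¹ * ∑ i, |x i - p a i|) := by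
      set a₀ : Fin k := D₁.equivFin ⟨x, hx⟩ with ha₀
      have hpa₀ : p a₀ = x := by
        simp [hpdef, ha₀]
      have h1 : max 0 (1 - δ⁻¹ * ∑ i, |x i - p a₀ i|) = 1 := by
        rw [hpa₀]; simp
      calc (1:ℝ) = max 0 (1 - δ⁻¹ * ∑ i, |x i - p a₀ i|) := h1.symm
        _ ≤ ∑ a : Fin k, max 0 (1 - δ⁻¹ * ∑ i, |x i - p a i|) :=
          Finset.single_le_sum (f := fun a => max 0 (1 - δ⁻¹ * ∑ i, |x i - p a i|))
            (fun a _ => le_max_left _ _) (Finset.mem_univ a₀)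
    exact le_trans key (le_max_right _ _)
    -- note: goal is 1 ≤ max 0 (∑ ...)
  · -- points of D₂
    intro x hx
    have hg0 : (0:ℝ) ≤ gnet δ p x 0 := le_max_left _ _
    have hFx : F x 0 = gnet δ p x 0 := by
      simp only [hF, reluV, Matrix.zero_mulVec, Pi.zero_apply, zero_add, one_mul]
      exact max_eq_right hg0
    have hHx : H (F x) 0 = max 0 (F x 0) := by
      simp only [hH, reluV, Matrix.one_mulVec, zero_mul, add_zero]
    show H (F x) 0 = 0
    rw [hHx, hFx, gnet_apply]
    have hzero : ∀ a : Fin k, max 0 (1 - δ⁻¹ * ∑ i, |x i - p a i|) = 0 := by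
      intro a
      have hd : δ ≤ ∑ i, |x i - p a i| := by
        have := hδ (p a) (hpmem a) x hx
        calc δ ≤ ∑ i, |p a i - x i| := this
          _ = ∑ i, |x i - p a i| := by
            refine Finset.sum_congr rfl fun i _ => abs_sub_comm _ _
      have h1 : (1:ℝ) ≤ δ⁻¹ * ∑ i, |x i - p a i| := by
        rw [le_inv_mul_iff₀ hδ0, mul_one]
        exact hd
      exact max_eq_left (by linarith)
    rw [Finset.sum_congr rfl fun a _ => hzero a]
    simp
end

section
/- For any finite set D ⊆ ℝⁿ partitioned into classes D₁,…,D_k, there exists a ResNet F : ℝⁿ → ℝᵏ such that argmax classification is exact: for every x ∈ D_i, F(x)_i > F(x)_j for all j ≠ i. -/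
namespace Stmt19Aux

noncomputable section
open Matrix Finset

def E (N n : ℕ) : (Fin N × Fin n) × Fin 2 ≃ Fin (N * n * 2) :=
  (finProdFinEquiv.prodCongr (Equiv.refl (Fin 2))).trans finProdFinEquiv

/-- ℓ¹ distance. -/
def d1 {n : ℕ} (x y : Fin n → ℝ) : ℝ := ∑ j, |x j - y j|

lemma d1_nonneg {n : ℕ} (x y : Fin n → ℝ) : 0 ≤ d1 x y :=
  Finset.sum_nonneg fun _ _ => abs_nonneg _

lemma d1_self {n : ℕ} (x : Fin n → ℝ) : d1 x x = 0 := by simp [d1]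

lemma d1_pos {n : ℕ} {x y : Fin n → ℝ} (h : x ≠ y) : 0 < d1 x y := by
  obtain ⟨j, hj⟩ := Function.ne_iff.mp h
  exact Finset.sum_pos' (fun _ _ => abs_nonneg _)
    ⟨j, Finset.mem_univ _, abs_pos.mpr (sub_ne_zero.mpr hj)⟩

variable {n k : ℕ} (N : ℕ) (p : Fin N → Fin n → ℝ) (M : ℝ)

def A1 : Matrix (Fin (N * n * 2)) (Fin n) ℝ := fun r c =>
  if c = ((E N n).symm r).1.2 then (if ((E N n).symm r).2 = 0 then 1 else -1) else 0

def c1 : Fin (N * n * 2) → ℝ := fun r =>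
  (if ((E N n).symm r).2 = 0 then -1 else 1) * p ((E N n).symm r).1.1 ((E N n).symm r).1.2

def A2 : Matrix (Fin N) (Fin (N * n * 2)) ℝ := fun t r =>
  if ((E N n).symm r).1.1 = t then -M else 0

def A3 (D : Fin k → Finset (Fin n → ℝ)) : Matrix (Fin k) (Fin N) ℝ := fun i t =>
  if p t ∈ D i then 1 else 0

lemma layer1_apply (x : Fin n → ℝ) (t : Fin N) (j : Fin n) (s : Fin 2) :
    reluV ((A1 N).mulVec x + c1 N p) (E N n ((t, j), s)) =
      max 0 ((if s = 0 then 1 else -1) * (x j - p t j)) := by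
  have h1 : (A1 N (n := n)).mulVec x (E N n ((t, j), s)) = (if s = 0 then 1 else -1) * x j := by
    simp only [Matrix.mulVec, dotProduct, A1, Equiv.symm_apply_apply]
    generalize (if s = 0 then (1:ℝ) else -1) = w
    simp [ite_mul, Finset.sum_ite_eq']
  simp only [reluV, Pi.add_apply, h1, c1, Equiv.symm_apply_apply]
  by_cases hs : s = 0 <;> simp [hs] <;> ring_nf

lemma layer2_apply (x : Fin n → ℝ) (t : Fin N) :
    reluV ((A2 N M).mulVec (reluV ((A1 N).mulVec x + c1 N p)) + 1) t =
      max 0 (1 - M * d1 x (p t)) := by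
  have key : (A2 N M (n := n)).mulVec (reluV ((A1 N).mulVec x + c1 N p)) t
      = -M * d1 x (p t) := by
    simp only [Matrix.mulVec, dotProduct, A2]
    rw [← Equiv.sum_comp (E N n)
      (fun r => (if ((E N n).symm r).1.1 = t then -M else 0) *
        reluV ((A1 N).mulVec x + c1 N p) r)]
    simp only [Equiv.symm_apply_apply]
    rw [Fintype.sum_prod_type, Fintype.sum_prod_type]
    have h2 : ∀ u : Fin N, ∀ j : Fin n,
        (∑ s : Fin 2, (if u = t then -M else 0) *
          reluV ((A1 N).mulVec x + c1 N p) (E N n ((u, j), s)))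
        = (if u = t then -M else 0) * |x j - p u j| := by
      intro u j
      rw [Fin.sum_univ_two, layer1_apply, layer1_apply]
      have e0 : (if (0:Fin 2) = 0 then (1:ℝ) else -1) = 1 := by norm_num
      have e1 : (if (1:Fin 2) = 0 then (1:ℝ) else -1) = -1 := by norm_num
      rw [e0, e1, one_mul, neg_one_mul, ← mul_add]
      congr 1
      have h := max_zero_add_max_neg_zero_eq_abs_self (x j - p u j)
      rw [max_comm (x j - p u j) 0, max_comm (-(x j - p u j)) 0] at h
      exact h
    simp only [h2]
    rw [Finset.sum_congr rfl (fun u _ => (Finset.mul_sum _ _ _).symm)]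
    simp [ite_mul, Finset.sum_ite_eq', d1]
  simp only [reluV, Pi.add_apply, key, Pi.one_apply]
  ring_nf

lemma layer3_apply (D : Fin k → Finset (Fin n → ℝ)) (x : Fin n → ℝ) (i : Fin k) :
    reluV ((A3 N p D).mulVec
        (reluV ((A2 N M).mulVec (reluV ((A1 N).mulVec x + c1 N p)) + 1)) + 0) i =
      max 0 (∑ t, (if p t ∈ D i then (1:ℝ) else 0) * max 0 (1 - M * d1 x (p t))) := by
  have harg : (A3 N p D).mulVec
      (reluV ((A2 N M).mulVec (reluV ((A1 N).mulVec x + c1 N p)) + 1)) i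
      = ∑ t, (if p t ∈ D i then (1:ℝ) else 0) * max 0 (1 - M * d1 x (p t)) := by
    simp only [Matrix.mulVec, dotProduct, A3]
    exact Finset.sum_congr rfl fun t _ => by rw [layer2_apply]
  show max 0 (((A3 N p D).mulVec _ + 0) i) = _
  rw [Pi.add_apply, Pi.zero_apply, add_zero, harg]

end
end Stmt19Aux

/-- Exact argmax classification by a ResNet on a finite multi-category data set. -/
theorem stmt19 {n k : ℕ} (D : Fin k → Finset (Fin n → ℝ))
    (hdisj : ∀ i j, i ≠ j → Disjoint (D i) (D j)) :
    ∃ F : (Fin n → ℝ) → (Fin k → ℝ), IsResNet F ∧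
      ∀ i : Fin k, ∀ x ∈ D i, ∀ j, j ≠ i → F x j < F x i := by
  classical
  set S : Finset (Fin n → ℝ) := Finset.univ.biUnion D with hS
  set N := S.card with hN
  set p : Fin N → Fin n → ℝ := fun t => ((S.equivFin.symm t : S) : Fin n → ℝ) with hp
  set M : ℝ := ∑ a ∈ S, ∑ b ∈ S, if a = b then 0 else (Stmt19Aux.d1 a b)⁻¹ with hM
  have hpmem : ∀ t, p t ∈ S := fun t => (S.equivFin.symm t).2
  have hsurj : ∀ x ∈ S, ∃ t, p t = x := fun x hx =>
    ⟨S.equivFin ⟨x, hx⟩, by simp [hp]⟩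
  have hMd : ∀ a ∈ S, ∀ b ∈ S, a ≠ b → 1 ≤ M * Stmt19Aux.d1 a b := by
    intro a ha b hb hab
    have hd := Stmt19Aux.d1_pos hab
    have hterm : ∀ a' b' : Fin n → ℝ,
        (0:ℝ) ≤ if a' = b' then 0 else (Stmt19Aux.d1 a' b')⁻¹ := by
      intro a' b'
      split
      · exact le_rfl
      · exact inv_nonneg.mpr (Stmt19Aux.d1_nonneg _ _)
    have h1 : (Stmt19Aux.d1 a b)⁻¹ ≤ M := by
      have hrow : (if a = b then (0:ℝ) else (Stmt19Aux.d1 a b)⁻¹)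
          ≤ ∑ b' ∈ S, if a = b' then 0 else (Stmt19Aux.d1 a b')⁻¹ :=
        Finset.single_le_sum (fun c _ => hterm a c) hb
      have hall : (∑ b' ∈ S, if a = b' then (0:ℝ) else (Stmt19Aux.d1 a b')⁻¹) ≤ M := by
        rw [hM]
        exact Finset.single_le_sum
          (fun c _ => Finset.sum_nonneg fun c' _ => hterm c c') ha
      rw [if_neg hab] at hrow
      exact hrow.trans hall
    calc (1:ℝ) = (Stmt19Aux.d1 a b)⁻¹ * Stmt19Aux.d1 a b := (inv_mul_cancel₀ hd.ne').symm
      _ ≤ M * Stmt19Aux.d1 a b := mul_le_mul_of_nonneg_right h1 hd.le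
  set g : (Fin n → ℝ) → (Fin k → ℝ) := fun x =>
    reluV ((Stmt19Aux.A3 N p D).mulVec
      (reluV ((Stmt19Aux.A2 N M).mulVec
        (reluV ((Stmt19Aux.A1 N).mulVec x + Stmt19Aux.c1 N p)) + 1)) + 0) with hg
  have hgnet : IsReLUNet g :=
    IsReLUNet.layer _ 0 (IsReLUNet.layer _ 1 (IsReLUNet.layer _ _ IsReLUNet.id))
  set F1 : (Fin n → ℝ) → (Fin k → ℝ) := fun x =>
    reluV (fun i => (0 : Matrix (Fin k) (Fin n) ℝ).mulVec x i + (fun _ : Fin k => (0:ℝ)) i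
      + (fun _ : Fin k => (1:ℝ)) i * g x i) with hF1
  have hB1 : IsResNetBlock F1 :=
    ⟨0, fun _ => 0, fun _ => 1, g, hgnet, fun x => rfl⟩
  set G2 : (Fin k → ℝ) → (Fin k → ℝ) := fun y =>
    reluV (fun i => (1 : Matrix (Fin k) (Fin k) ℝ).mulVec y i + (fun _ : Fin k => (0:ℝ)) i
      + (fun _ : Fin k => (0:ℝ)) i * (fun z : Fin k → ℝ => z) y i) with hG2
  have hB2 : IsResNetBlock G2 :=
    ⟨1, fun _ => 0, fun _ => 0, fun z => z, IsReLUNet.id, fun x => rfl⟩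
  have hg0 : ∀ x i, 0 ≤ g x i := fun x i => le_max_left _ _
  have hval : ∀ x i, G2 (F1 x) i = g x i := by
    intro x i
    have h1 : F1 x i = g x i := by
      show max 0 ((0 : Matrix (Fin k) (Fin n) ℝ).mulVec x i + 0 + 1 * g x i) = g x i
      rw [Matrix.zero_mulVec]
      simp [max_eq_right (hg0 x i)]
    show max 0 ((1 : Matrix (Fin k) (Fin k) ℝ).mulVec (F1 x) i + 0 + 0 * F1 x i) = g x i
    rw [Matrix.one_mulVec]
    simp [h1, max_eq_right (hg0 x i)]
  refine ⟨fun x => G2 (F1 x), ⟨2, le_refl 2,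
    IsResNetAux.comp (IsResNetAux.block hB1) hB2⟩, ?_⟩
  intro i x hx j hji
  have hxS : x ∈ S := Finset.mem_biUnion.mpr ⟨i, Finset.mem_univ _, hx⟩
  obtain ⟨t0, ht0⟩ := hsurj x hxS
  have hgx : ∀ i' : Fin k, g x i' =
      max 0 (∑ t, (if p t ∈ D i' then (1:ℝ) else 0)
        * max 0 (1 - M * Stmt19Aux.d1 x (p t))) := fun i' =>
    Stmt19Aux.layer3_apply N p M D x i'
  simp only [hval]
  -- g x j = 0
  have hzero : g x j = 0 := by
    rw [hgx j]
    have : (∑ t, (if p t ∈ D j then (1:ℝ) else 0)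
        * max 0 (1 - M * Stmt19Aux.d1 x (p t))) = 0 := by
      refine Finset.sum_eq_zero fun t _ => ?_
      by_cases hmem : p t ∈ D j
      · have hne : p t ≠ x := by
          intro h
          exact (Finset.disjoint_left.mp (hdisj j i hji) hmem) (h ▸ hx)
        have h1 : 1 ≤ M * Stmt19Aux.d1 x (p t) := hMd x hxS (p t) (hpmem t) (Ne.symm hne)
        have : max 0 (1 - M * Stmt19Aux.d1 x (p t)) = 0 :=
          max_eq_left (by linarith)
        rw [this, mul_zero]
      · rw [if_neg hmem, zero_mul]
    rw [this]
    simp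
  -- g x i ≥ 1
  have hone : (1:ℝ) ≤ g x i := by
    rw [hgx i]
    have hterm : (if p t0 ∈ D i then (1:ℝ) else 0)
        * max 0 (1 - M * Stmt19Aux.d1 x (p t0)) = 1 := by
      rw [ht0, if_pos hx, Stmt19Aux.d1_self, mul_zero, sub_zero, one_mul]
      norm_num
    have hle : (1:ℝ) ≤ ∑ t, (if p t ∈ D i then (1:ℝ) else 0)
        * max 0 (1 - M * Stmt19Aux.d1 x (p t)) := by
      have hsum := Finset.single_le_sum (f := fun t => (if p t ∈ D i then (1:ℝ) else 0)
        * max 0 (1 - M * Stmt19Aux.d1 x (p t))) (fun t _ => by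
          refine mul_nonneg ?_ (le_max_left _ _)
          split <;> norm_num) (Finset.mem_univ t0)
      simpa only [hterm] using hsum
    exact hle.trans (le_max_right _ _)
  rw [hzero]
  linarith
end
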